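/- Let σ : ℝ → ℝ be μ-Lipschitz with σ(0) = 0, and for a matrix X let σ.(X) denote entrywise application of σ. Then for all real matrices W, W' of size m×n and A, A' of size n×p, ‖σ.(W·A) − σ.(W'·A')‖_F ≤ μ·( ‖W‖₂·‖A − A'‖_F + ‖W − W'‖_F·‖A'‖_F ). -/

import Mathlib

/-!
Entrywise, `σ` is `μ`-Lipschitz, so the left-hand side is at most `μ ‖W A - W' A'‖_F`. Split
`W A - W' A' = W (A - A') + (W - W') A'`: the first term is bounded column by column by the
spectral norm of `W`, the second by submultiplicativity of the Frobenius norm.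
-/

open Matrix

noncomputable def frobNorm {k l : ℕ} (M : Matrix (Fin k) (Fin l) ℝ) : ℝ :=
  Real.sqrt (∑ i, ∑ j, (M i j) ^ 2)

variable {k l r : ℕ}

lemma frobNorm_nonneg (M : Matrix (Fin k) (Fin l) ℝ) : 0 ≤ frobNorm M :=
  Real.sqrt_nonneg _

section Frobenius

open scoped Matrix.Norms.Frobenius

lemma frobNorm_eq_norm (M : Matrix (Fin k) (Fin l) ℝ) : frobNorm M = ‖M‖ := by
  simp only [frobNorm, frobenius_norm_def, Real.norm_eq_abs, Real.rpow_two, sq_abs,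
    ← Real.sqrt_eq_rpow]

lemma frobNorm_add_le (M N : Matrix (Fin k) (Fin l) ℝ) :
    frobNorm (M + N) ≤ frobNorm M + frobNorm N := by
  simpa only [frobNorm_eq_norm] using norm_add_le M N

lemma frobNorm_smul (c : ℝ) (M : Matrix (Fin k) (Fin l) ℝ) :
    frobNorm (c • M) = |c| * frobNorm M := by
  simp only [frobNorm_eq_norm, norm_smul, Real.norm_eq_abs]

lemma frobNorm_mul_le (M : Matrix (Fin k) (Fin l) ℝ) (N : Matrix (Fin l) (Fin r) ℝ) :
    frobNorm (M * N) ≤ frobNorm M * frobNorm N := by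
  simpa only [frobNorm_eq_norm] using frobenius_norm_mul M N

end Frobenius

lemma frobNorm_le_of_abs_le {M N : Matrix (Fin k) (Fin l) ℝ} (h : ∀ i j, |M i j| ≤ |N i j|) :
    frobNorm M ≤ frobNorm N :=
  Real.sqrt_le_sqrt <| Finset.sum_le_sum fun i _ => Finset.sum_le_sum fun j _ =>
    sq_le_sq.mpr (h i j)

lemma frobNorm_map_sub_map_le {K : NNReal} {σ : ℝ → ℝ} (hσ : LipschitzWith K σ)
    (M N : Matrix (Fin k) (Fin l) ℝ) :
    frobNorm (M.map σ - N.map σ) ≤ K * frobNorm (M - N) := by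
  calc frobNorm (M.map σ - N.map σ) ≤ frobNorm ((K : ℝ) • (M - N)) :=
        frobNorm_le_of_abs_le fun i j => by
          simpa [abs_mul, ← Real.dist_eq] using hσ.dist_le_mul (M i j) (N i j)
    _ = K * frobNorm (M - N) := by rw [frobNorm_smul, NNReal.abs_eq]

lemma sq_frobNorm_eq_sum_col (M : Matrix (Fin k) (Fin l) ℝ) :
    frobNorm M ^ 2 = ∑ j, ‖(EuclideanSpace.equiv (Fin k) ℝ).symm (M.col j)‖ ^ 2 := by
  rw [frobNorm, Real.sq_sqrt (by positivity), Finset.sum_comm]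
  simp [EuclideanSpace.norm_sq_eq]

lemma Matrix.col_mul {α m n o : Type*} [Fintype n] [NonUnitalNonAssocSemiring α]
    (M : Matrix m n α) (N : Matrix n o α) (j : o) : (M * N).col j = M *ᵥ N.col j :=
  rfl

open scoped Matrix.Norms.L2Operator

lemma frobNorm_mul_le_l2_opNorm_mul (M : Matrix (Fin k) (Fin l) ℝ) (N : Matrix (Fin l) (Fin r) ℝ) :
    frobNorm (M * N) ≤ ‖M‖ * frobNorm N := by
  refine le_of_sq_le_sq ?_ (mul_nonneg (norm_nonneg M) (frobNorm_nonneg N))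
  rw [mul_pow, sq_frobNorm_eq_sum_col, sq_frobNorm_eq_sum_col, Finset.mul_sum]
  refine Finset.sum_le_sum fun j _ => ?_
  rw [← mul_pow, col_mul]
  exact pow_le_pow_left₀ (norm_nonneg _) (M.l2_opNorm_mulVec _) 2

theorem stmt13_general (μ : ℝ) (hμ : 0 ≤ μ) (σ : ℝ → ℝ)
    (hσ : ∀ x y : ℝ, |σ x - σ y| ≤ μ * |x - y|)
    (m n p : ℕ) (W W' : Matrix (Fin m) (Fin n) ℝ)
    (A A' : Matrix (Fin n) (Fin p) ℝ) :
    frobNorm ((W * A).map σ - (W' * A').map σ)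
      ≤ μ * (‖W‖ * frobNorm (A - A') + frobNorm (W - W') * frobNorm A') := by
  have hσ_lip : LipschitzWith ⟨μ, hμ⟩ σ :=
    LipschitzWith.of_dist_le_mul fun x y => by
      rw [Real.dist_eq, Real.dist_eq]
      exact hσ x y
  have h_split : W * A - W' * A' = W * (A - A') + (W - W') * A' := by
    rw [Matrix.mul_sub, Matrix.sub_mul]; abel
  calc frobNorm ((W * A).map σ - (W' * A').map σ) ≤ μ * frobNorm (W * A - W' * A') :=
        frobNorm_map_sub_map_le hσ_lip _ _
    _ ≤ μ * (frobNorm (W * (A - A')) + frobNorm ((W - W') * A')) := by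
        rw [h_split]; gcongr; exact frobNorm_add_le _ _
    _ ≤ μ * (‖W‖ * frobNorm (A - A') + frobNorm (W - W') * frobNorm A') := by
        gcongr
        · exact frobNorm_mul_le_l2_opNorm_mul _ _
        · exact frobNorm_mul_le _ _

/-- inductive step of Lemma 9.3: one-layer perturbation
inequality.  Here `‖W‖` denotes the spectral norm (ℓ²→ℓ² operator norm) and
`frobNorm` the Frobenius norm. -/
theorem stmt13 (μ : ℝ) (hμ : 0 ≤ μ) (σ : ℝ → ℝ)
    (hσ : ∀ x y : ℝ, |σ x - σ y| ≤ μ * |x - y|) (hσ0 : σ 0 = 0)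
    (m n p : ℕ) (W W' : Matrix (Fin m) (Fin n) ℝ)
    (A A' : Matrix (Fin n) (Fin p) ℝ) :
    frobNorm ((W * A).map σ - (W' * A').map σ)
      ≤ μ * (‖W‖ * frobNorm (A - A') + frobNorm (W - W') * frobNorm A') :=
  stmt13_general μ hμ σ hσ m n p W W' A A'
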